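/- Let ω, C₀ be real numbers with ω ≠ 0. Let 𝒯_C be the 2×2 complex matrix 𝒯_C = [[cos ω, sin ω/ω], [(1−ω²)·C₀·cos ω − ω·sin ω, cos ω − C₀·(ω − 1/ω)·sin ω]], and define the CCS instability parameter W_C(ω) = (C₀/2)·(ω − 1/ω)·sin ω − cos ω. Then for every complex number s, det(𝒯_C − s·𝟙) = s² + 2·W_C(ω)·s + 1. In particular det 𝒯_C = 1 and trace 𝒯_C = −2·W_C(ω). -/

import Mathlib

open Matrix

/-! The monodromy matrix has real entries, unit determinant (by `sin² + cos² = 1`) and trace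
`-2 W_C(ω)`; for any `2 × 2` matrix, `det (A - s 𝟙) = s² - (tr A) s + det A`. -/

theorem Matrix.det_sub_smul_one_fin_two {R : Type*} [CommRing R]
    (A : Matrix (Fin 2) (Fin 2) R) (s : R) :
    (A - s • (1 : Matrix (Fin 2) (Fin 2) R)).det = s ^ 2 - A.trace * s + A.det := by
  simp [det_fin_two, trace_fin_two]
  ring

noncomputable section

namespace CCS

def monodromy (ω C₀ : ℝ) : Matrix (Fin 2) (Fin 2) ℝ :=
  !![Real.cos ω, Real.sin ω / ω;
     (1 - ω ^ 2) * C₀ * Real.cos ω - ω * Real.sin ω, Real.cos ω - C₀ * (ω - 1 / ω) * Real.sin ω]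

def instability (ω C₀ : ℝ) : ℝ :=
  C₀ / 2 * (ω - 1 / ω) * Real.sin ω - Real.cos ω

theorem det_monodromy {ω : ℝ} (C₀ : ℝ) (hω : ω ≠ 0) : (monodromy ω C₀).det = 1 := by
  rw [monodromy, det_fin_two_of]
  field_simp
  linear_combination ω * Real.sin_sq_add_cos_sq ω

theorem trace_monodromy (ω C₀ : ℝ) :
    (monodromy ω C₀).trace = -2 * instability ω C₀ := by
  rw [monodromy, instability, trace_fin_two_of]
  ring

end CCS

end

/-- The characteristic polynomial of the CCS monodromy matrix:
`det (𝒯_C - s 𝟙) = s² + 2 W_C(ω) s + 1`. -/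
theorem ccs_monodromy_char_poly
    (ω C₀ : ℝ) (hω : ω ≠ 0) :
    let T : Matrix (Fin 2) (Fin 2) ℂ :=
      !![(Real.cos ω : ℂ), ((Real.sin ω / ω : ℝ) : ℂ);
         (((1 - ω ^ 2) * C₀ * Real.cos ω - ω * Real.sin ω : ℝ) : ℂ),
         ((Real.cos ω - C₀ * (ω - 1 / ω) * Real.sin ω : ℝ) : ℂ)]
    let W : ℝ := C₀ / 2 * (ω - 1 / ω) * Real.sin ω - Real.cos ω
    (∀ s : ℂ, (T - s • (1 : Matrix (Fin 2) (Fin 2) ℂ)).det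
        = s ^ 2 + 2 * (W : ℂ) * s + 1)
      ∧ T.det = 1 ∧ T.trace = -2 * (W : ℂ) := by
  intro T W
  have hT : T = (CCS.monodromy ω C₀).map Complex.ofRealHom := by
    ext i j
    fin_cases i <;> fin_cases j <;> rfl
  have hdet : T.det = 1 := by
    rw [hT, ← RingHom.mapMatrix_apply, ← RingHom.map_det,
      CCS.det_monodromy C₀ hω, map_one]
  have htrace : T.trace = -2 * (W : ℂ) := by
    rw [hT, ← AddMonoidHom.map_trace, CCS.trace_monodromy, Complex.ofRealHom_eq_coe,
      Complex.ofReal_mul, Complex.ofReal_neg, Complex.ofReal_ofNat]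
    rfl
  refine ⟨fun s => ?_, hdet, htrace⟩
  rw [det_sub_smul_one_fin_two, hdet, htrace]
  ring
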